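/- Let A and A' be unital C*-algebras, P₁ a nontrivial symmetric projection in A, P₂ = I_A − P₁, A_{jk} = P_j A P_k, and suppose A satisfies (♠): for j ∈ {1,2}, P_j A X = {0} implies X = 0. Fix an integer n ≥ 2 and let φ: A → A' be a bijective map with φ(I_A) = I_{A'}, φ(λA) = λφ(A) for all λ ∈ ℂ, satisfying (•): φ(p_{n*}(A,B,Ξ,…,Ξ)) = p_{n*}(φ(A),φ(B),φ(Ξ),…,φ(Ξ)) for all A, B ∈ A and Ξ ∈ {P₁, P₂, I_A}. Then for j ≠ k in {1,2}, any A_{jj} ∈ A_{jj} and B_{jk} ∈ A_{jk} satisfy φ(A_{jj} B_{jk}) = φ(A_{jj})φ(B_{jk}). -/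

import Mathlib

/-!
For `n = 2` the hypothesis says that `φ` preserves `[a, b]_*`. Since `b a* = 0` for `a ∈ A_jj`,
`b ∈ A_jk`, we have `[a, b]_* = a b` and `[i a, b]_* = i a b`, and
`2 a b = [a, b]_* - i [i a, b]_*` holds in any `*`-algebra, so `φ (a b) = φ a φ b`.

For `n ≥ 3`, `φ` is in fact additive, hence `ℂ`-linear, and then multiplicative on all of `A`:
`p_{n*}(u, v, 1) = 2^(n-3) (c - c*)` with `c = [u, v]_*`, and `4 u v` is a `ℂ`-linear combination
of these expressions evaluated at `u, i u` and `v, i v`.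
Additivity comes from the Peirce decomposition for a star projection `f` and `e = 1 - f`: once
`f c f = 0`, the iteration `z ↦ [z, f]_*` is constant after its first step, so
`p_{n*}(e, u, f) = w - w*` with `w = e u f`, and `p_{n*}(e z f, u, f) = w - w*` with
`w = e z (f u f)`. These tests recover `e u f`, and by (♠) also `f u f`. If `φ t = φ x + φ y`,
then `t` and `x + y` give the same test values as soon as `φ` is additive on the test values of
`x` and `y`. This is trivial when `x` and `y` have disjoint Peirce supports. Within a single
component it reduces to additivity on `{w - w* | w ∈ e A f}`, which follows from
`p_{n*}(e + w', w + f, f) = (w + w') - (w + w')*`.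
-/

/-- The `*`-Lie product `[x,y]_* = xy - y x*`. -/
def starLie {R : Type*} [Ring R] [StarRing R] (x y : R) : R := x * y - y * star x

/-- `pn n a b xi = p_{n*}(a, b, xi, ..., xi)` (with `n - 2` trailing copies of `xi`). -/
def pn {R : Type*} [Ring R] [StarRing R] (n : ℕ) (a b ξ : R) : R :=
  (fun z => starLie z ξ)^[n - 2] (starLie a b)

open Function

section StarLie

variable {R : Type*} [Ring R] [StarRing R]

lemma starLie_add_left (x y ξ : R) : starLie (x + y) ξ = starLie x ξ + starLie y ξ := by
  simp only [starLie, star_add, mul_add, add_mul]; abel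

lemma starLie_add_right (a x y : R) : starLie a (x + y) = starLie a x + starLie a y := by
  simp only [starLie, mul_add, add_mul]; abel

def starLieRight (ξ : R) : R →+ R where
  toFun z := starLie z ξ
  map_zero' := by simp [starLie]
  map_add' x y := starLie_add_left x y ξ

lemma pn_eq_iterate (n : ℕ) (a b ξ : R) :
    pn n a b ξ = (starLieRight ξ)^[n - 2] (starLie a b) := rfl

lemma pn_add_three (k : ℕ) (a b ξ : R) :
    pn (k + 3) a b ξ = (starLieRight ξ)^[k] (starLie (starLie a b) ξ) :=
  iterate_succ_apply _ _ _

lemma pn_add_left (n : ℕ) (a a' b ξ : R) : pn n (a + a') b ξ = pn n a b ξ + pn n a' b ξ := by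
  rw [pn_eq_iterate, starLie_add_left, iterate_map_add]; rfl

lemma pn_add_right (n : ℕ) (a b b' ξ : R) : pn n a (b + b') ξ = pn n a b ξ + pn n a b' ξ := by
  rw [pn_eq_iterate, starLie_add_right, iterate_map_add]; rfl

lemma starLie_one (z : R) : starLie z 1 = z - star z := by
  simp [starLie]

def skewStarLie (u v : R) : R := starLie u v - star (starLie u v)

lemma pn_one (k : ℕ) (a b : R) : pn (k + 3) a b 1 = 2 ^ k • skewStarLie a b := by
  rw [pn_add_three, starLie_one, skewStarLie]
  generalize starLie a b = c
  have hdouble : starLieRight (1 : R) (c - star c) = 2 • (c - star c) := by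
    rw [starLieRight, AddMonoidHom.coe_mk, ZeroHom.coe_mk, starLie_one, star_sub, star_star,
      two_nsmul]
    abel
  induction k with
  | zero => simp
  | succ k ih => rw [iterate_succ_apply', ih, map_nsmul, hdouble, smul_smul, ← pow_succ]

end StarLie

lemma mul_mul_eq_zero_of_mul_eq_zero {M : Type*} [SemigroupWithZero M] {a b : M} (h : a * b = 0)
    (x : M) : a * (b * x) = 0 := by
  rw [← mul_assoc, h, zero_mul]

lemma map_add_of_eq_zero_or {M N : Type*} [AddZeroClass M] [AddZeroClass N] {φ : M → N}
    (hφ : φ 0 = 0) {u v : M} (h : u = 0 ∨ v = 0) : φ (u + v) = φ u + φ v := by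
  rcases h with rfl | rfl <;> simp [hφ]

section Peirce

variable {R : Type*} [Ring R] [StarRing R] {e f : R}

namespace IsStarProjection

lemma of_add_eq_one (he : IsStarProjection e) (hef : e + f = 1) : IsStarProjection f := by
  rw [eq_sub_of_add_eq' hef]; exact he.one_sub

lemma mul_eq_zero_of_add_eq_one (he : IsStarProjection e) (hef : e + f = 1) : e * f = 0 := by
  rw [eq_sub_of_add_eq' hef]; exact he.mul_one_sub_self

lemma mul_eq_zero_of_add_eq_one' (he : IsStarProjection e) (hef : e + f = 1) : f * e = 0 := by
  rw [eq_sub_of_add_eq' hef]; exact he.one_sub_mul_self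

end IsStarProjection

lemma pn_of_mul_starLie_mul_eq_zero (hf : IsStarProjection f) (hef : e + f = 1) (k : ℕ) {a b : R}
    (h : f * starLie a b * f = 0) :
    pn (k + 3) a b f = e * starLie a b * f - star (e * starLie a b * f) := by
  have hfe : f + e = 1 := by rwa [add_comm]
  have he := hf.of_add_eq_one hfe
  have hef₀ := he.mul_eq_zero_of_add_eq_one hef
  have hfe₀ := hf.mul_eq_zero_of_add_eq_one hfe
  rw [pn_add_three]
  generalize starLie a b = c at h ⊢
  have hcf : c * f = e * c * f := by
    calc c * f = (e + f) * c * f := by rw [hef, one_mul]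
      _ = e * c * f := by rw [add_mul, add_mul, h, add_zero]
  have hfirst : starLie c f = e * c * f - star (e * c * f) := by
    rw [starLie, ← hcf, star_mul, hf.isSelfAdjoint.star_eq]
  have hfix : starLieRight f (e * c * f - star (e * c * f)) = e * c * f - star (e * c * f) := by
    simp only [starLieRight, AddMonoidHom.coe_mk, ZeroHom.coe_mk, starLie, star_sub, star_star,
      star_mul, he.isSelfAdjoint.star_eq, hf.isSelfAdjoint.star_eq, sub_mul, mul_sub, mul_assoc,
      hf.isIdempotentElem.eq, hf.isIdempotentElem.mul_self_mul, hef₀,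
      mul_mul_eq_zero_of_mul_eq_zero hfe₀, mul_zero, sub_zero]
  rw [hfirst]
  exact iterate_fixed hfix k

lemma pn_proj_compl (he : IsStarProjection e) (hef : e + f = 1) (k : ℕ) (u : R) :
    pn (k + 3) e u f = e * u * f - star (e * u * f) := by
  have hef₀ := he.mul_eq_zero_of_add_eq_one hef
  have hfe₀ := he.mul_eq_zero_of_add_eq_one' hef
  have hc : starLie e u = e * u - u * e := by rw [starLie, he.isSelfAdjoint.star_eq]
  rw [pn_of_mul_starLie_mul_eq_zero (he.of_add_eq_one hef) hef k (by simp [hc, mul_sub, mul_assoc,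
    hef₀, mul_mul_eq_zero_of_mul_eq_zero hfe₀]), hc]
  simp [mul_sub, sub_mul, mul_assoc, he.isIdempotentElem.mul_self_mul, hef₀]

lemma pn_corner_compl (he : IsStarProjection e) (hef : e + f = 1) (k : ℕ) (z u : R) :
    pn (k + 3) (e * z * f) u f = e * z * (f * u * f) - star (e * z * (f * u * f)) := by
  have hf := he.of_add_eq_one hef
  have hef₀ := he.mul_eq_zero_of_add_eq_one hef
  have hfe₀ := he.mul_eq_zero_of_add_eq_one' hef
  have hc : starLie (e * z * f) u = e * z * f * u - u * (f * (star z * e)) := by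
    rw [starLie, star_mul, star_mul, he.isSelfAdjoint.star_eq, hf.isSelfAdjoint.star_eq]
  rw [pn_of_mul_starLie_mul_eq_zero hf hef k (by rw [hc]; simp [mul_sub,
    mul_assoc, hef₀, mul_mul_eq_zero_of_mul_eq_zero hfe₀]), hc]
  simp [mul_sub, sub_mul, mul_assoc, he.isIdempotentElem.mul_self_mul, hef₀]

lemma pn_proj_compl_eq_zero (he : IsStarProjection e) (hef : e + f = 1) (k : ℕ) {u : R}
    (hu : e * u * f = 0) : pn (k + 3) e u f = 0 := by
  rw [pn_proj_compl he hef, hu, star_zero, sub_zero]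

lemma pn_corner_compl_eq_zero (he : IsStarProjection e) (hef : e + f = 1) (k : ℕ) (z : R) {u : R}
    (hu : f * u * f = 0) : pn (k + 3) (e * z * f) u f = 0 := by
  rw [pn_corner_compl he hef, hu, mul_zero, star_zero, sub_zero]

lemma pn_proj_compl_corner (he : IsStarProjection e) (hef : e + f = 1) (k : ℕ) (x : R) :
    pn (k + 3) e (e * x * f) f = e * x * f - star (e * x * f) := by
  have hf := he.of_add_eq_one hef
  rw [pn_proj_compl he hef]
  simp only [mul_assoc, he.isIdempotentElem.mul_self_mul, hf.isIdempotentElem.eq]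

lemma mul_sub_star_mul_of_corner (he : IsStarProjection e) (hef : e + f = 1) {w : R}
    (hw : e * w * f = w) : e * (w - star w) * f = w := by
  have hf := he.of_add_eq_one hef
  have hstar : e * star w * f = 0 := by
    rw [← hw, star_mul, star_mul, he.isSelfAdjoint.star_eq, hf.isSelfAdjoint.star_eq]
    simp only [mul_assoc, he.mul_eq_zero_of_add_eq_one hef, mul_zero]
  rw [mul_sub, sub_mul, hw, hstar, sub_zero]

lemma corner_eq_of_pn_eq (he : IsStarProjection e) (hef : e + f = 1) (k : ℕ) {t s : R}
    (h : pn (k + 3) e t f = pn (k + 3) e s f) : e * t * f = e * s * f := by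
  have hf := he.of_add_eq_one hef
  have key : ∀ u, e * pn (k + 3) e u f * f = e * u * f := fun u => by
    rw [pn_proj_compl he hef, mul_sub_star_mul_of_corner he hef]
    simp only [mul_assoc, he.isIdempotentElem.mul_self_mul, hf.isIdempotentElem.eq]
  rw [← key t, h, key s]

lemma compl_corner_eq_of_pn_eq (he : IsStarProjection e) (hef : e + f = 1)
    (hse : ∀ X : R, (∀ Y : R, e * Y * X = 0) → X = 0) (k : ℕ) {t s : R}
    (h : ∀ z, pn (k + 3) (e * z * f) t f = pn (k + 3) (e * z * f) s f) :
    f * t * f = f * s * f := by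
  have hf := he.of_add_eq_one hef
  have key : ∀ z u, e * pn (k + 3) (e * z * f) u f * f = e * z * (f * u * f) := fun z u => by
    rw [pn_corner_compl he hef, mul_sub_star_mul_of_corner he hef]
    simp only [mul_assoc, he.isIdempotentElem.mul_self_mul, hf.isIdempotentElem.eq]
  rw [← sub_eq_zero]
  refine hse _ fun z => ?_
  rw [mul_sub, ← key, ← key, h, sub_self]

omit [StarRing R] in
lemma peirce_decomposition (hef : e + f = 1) (t : R) :
    e * t * e + e * t * f + (f * t * e + f * t * f) = t := by
  calc _ = (e + f) * t * (e + f) := by simp only [add_mul, mul_add]; abel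
    _ = t := by rw [hef, one_mul, mul_one]

lemma eq_of_pn_eq (he : IsStarProjection e) (hef : e + f = 1)
    (hse : ∀ X : R, (∀ Y : R, e * Y * X = 0) → X = 0)
    (hsf : ∀ X : R, (∀ Y : R, f * Y * X = 0) → X = 0) (k : ℕ) {t s : R}
    (h_ef : pn (k + 3) e t f = pn (k + 3) e s f) (h_fe : pn (k + 3) f t e = pn (k + 3) f s e)
    (h_ff : ∀ z, pn (k + 3) (e * z * f) t f = pn (k + 3) (e * z * f) s f)
    (h_ee : ∀ z, pn (k + 3) (f * z * e) t e = pn (k + 3) (f * z * e) s e) : t = s := by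
  have hfe : f + e = 1 := by rwa [add_comm]
  have hf := he.of_add_eq_one hef
  rw [← peirce_decomposition hef t, ← peirce_decomposition hef s,
    corner_eq_of_pn_eq he hef k h_ef, corner_eq_of_pn_eq hf hfe k h_fe,
    compl_corner_eq_of_pn_eq he hef hse k h_ff, compl_corner_eq_of_pn_eq hf hfe hsf k h_ee]

end Peirce

section Preserver

variable {A A' : Type*} [Ring A] [StarRing A] [Ring A'] [StarRing A'] {e f : A}

lemma pn_eq_of_map_eq_add {n : ℕ} {φ : A → A'} {ξ : A}
    (hφ : ∀ a b, φ (pn n a b ξ) = pn n (φ a) (φ b) (φ ξ)) (hinj : Injective φ)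
    {t x y : A} (ht : φ t = φ x + φ y) (z : A)
    (h : φ (pn n z x ξ + pn n z y ξ) = φ (pn n z x ξ) + φ (pn n z y ξ)) :
    pn n z t ξ = pn n z (x + y) ξ :=
  hinj <| by rw [hφ, ht, pn_add_right, ← hφ, ← hφ, ← h, pn_add_right]

/-- `spade_left` and `spade_right` are condition (♠); the theorem's `n` is `k + 3`. -/
structure IsPnPreserver (k : ℕ) (e f : A) (φ : A → A') : Prop where
  isStarProjection : IsStarProjection e
  add_eq_one : e + f = 1
  spade_left : ∀ X : A, (∀ Y : A, e * Y * X = 0) → X = 0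
  spade_right : ∀ X : A, (∀ Y : A, f * Y * X = 0) → X = 0
  bijective : Bijective φ
  map_zero : φ 0 = 0
  map_pn_left : ∀ a b, φ (pn (k + 3) a b e) = pn (k + 3) (φ a) (φ b) (φ e)
  map_pn_right : ∀ a b, φ (pn (k + 3) a b f) = pn (k + 3) (φ a) (φ b) (φ f)

namespace IsPnPreserver

variable {k : ℕ} {φ : A → A'}

lemma symm (h : IsPnPreserver k e f φ) : IsPnPreserver k f e φ where
  isStarProjection := h.isStarProjection.of_add_eq_one h.add_eq_one
  add_eq_one := by rw [add_comm, h.add_eq_one]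
  spade_left := h.spade_right
  spade_right := h.spade_left
  bijective := h.bijective
  map_zero := h.map_zero
  map_pn_left := h.map_pn_right
  map_pn_right := h.map_pn_left

lemma map_add_of_map_add_pn (h : IsPnPreserver k e f φ) {x y : A}
    (h_ef : φ (pn (k + 3) e x f + pn (k + 3) e y f)
      = φ (pn (k + 3) e x f) + φ (pn (k + 3) e y f))
    (h_fe : φ (pn (k + 3) f x e + pn (k + 3) f y e)
      = φ (pn (k + 3) f x e) + φ (pn (k + 3) f y e))
    (h_ff : ∀ z, φ (pn (k + 3) (e * z * f) x f + pn (k + 3) (e * z * f) y f)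
      = φ (pn (k + 3) (e * z * f) x f) + φ (pn (k + 3) (e * z * f) y f))
    (h_ee : ∀ z, φ (pn (k + 3) (f * z * e) x e + pn (k + 3) (f * z * e) y e)
      = φ (pn (k + 3) (f * z * e) x e) + φ (pn (k + 3) (f * z * e) y e)) :
    φ (x + y) = φ x + φ y := by
  obtain ⟨t, ht⟩ := h.bijective.2 (φ x + φ y)
  have hinj := h.bijective.1
  rw [← ht, eq_of_pn_eq h.isStarProjection h.add_eq_one h.spade_left h.spade_right k
    (pn_eq_of_map_eq_add h.map_pn_right hinj ht e h_ef)
    (pn_eq_of_map_eq_add h.map_pn_left hinj ht f h_fe)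
    (fun z => pn_eq_of_map_eq_add h.map_pn_right hinj ht _ (h_ff z))
    (fun z => pn_eq_of_map_eq_add h.map_pn_left hinj ht _ (h_ee z))]

lemma map_add_of_disjoint (h : IsPnPreserver k e f φ) {x y : A}
    (h_ee : e * x * e = 0 ∨ e * y * e = 0) (h_ef : e * x * f = 0 ∨ e * y * f = 0)
    (h_fe : f * x * e = 0 ∨ f * y * e = 0) (h_ff : f * x * f = 0 ∨ f * y * f = 0) :
    φ (x + y) = φ x + φ y := by
  have he := h.isStarProjection
  have hf := h.symm.isStarProjection
  have hef := h.add_eq_one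
  have hfe := h.symm.add_eq_one
  exact h.map_add_of_map_add_pn
    (map_add_of_eq_zero_or h.map_zero <| h_ef.imp (pn_proj_compl_eq_zero he hef k)
      (pn_proj_compl_eq_zero he hef k))
    (map_add_of_eq_zero_or h.map_zero <| h_fe.imp (pn_proj_compl_eq_zero hf hfe k)
      (pn_proj_compl_eq_zero hf hfe k))
    (fun z => map_add_of_eq_zero_or h.map_zero <| h_ff.imp (pn_corner_compl_eq_zero he hef k z)
      (pn_corner_compl_eq_zero he hef k z))
    (fun z => map_add_of_eq_zero_or h.map_zero <| h_ee.imp (pn_corner_compl_eq_zero hf hfe k z)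
      (pn_corner_compl_eq_zero hf hfe k z))

lemma map_sub_star_add (h : IsPnPreserver k e f φ) (x y : A) :
    φ ((e * x * f + e * y * f) - star (e * x * f + e * y * f))
      = φ (e * x * f - star (e * x * f)) + φ (e * y * f - star (e * y * f)) := by
  have he := h.isStarProjection
  have hf := h.symm.isStarProjection
  have hef := h.add_eq_one
  have hef₀ := he.mul_eq_zero_of_add_eq_one hef
  have hfe₀ := he.mul_eq_zero_of_add_eq_one' hef
  have hsplit_left : φ (e + e * y * f) = φ e + φ (e * y * f) := by
    apply h.map_add_of_disjoint <;>
      simp [mul_assoc, he.isIdempotentElem.eq, hef₀, hfe₀, mul_mul_eq_zero_of_mul_eq_zero hfe₀]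
  have hsplit_right : φ (e * x * f + f) = φ (e * x * f) + φ f := by
    apply h.map_add_of_disjoint <;>
      simp [mul_assoc, hf.isIdempotentElem.eq, hef₀, hfe₀, mul_mul_eq_zero_of_mul_eq_zero hfe₀]
  have v₁ := pn_proj_compl_corner he hef k x
  have v₂ : pn (k + 3) e f f = 0 :=
    pn_proj_compl_eq_zero he hef k (by rw [hef₀, zero_mul])
  have v₃ : pn (k + 3) (e * y * f) (e * x * f) f = 0 :=
    pn_corner_compl_eq_zero he hef k y (by simp [mul_assoc, mul_mul_eq_zero_of_mul_eq_zero hfe₀])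
  have v₄ : pn (k + 3) (e * y * f) f f = e * y * f - star (e * y * f) := by
    rw [pn_corner_compl he hef, hf.isIdempotentElem.eq, hf.isIdempotentElem.eq, mul_assoc _ y]
  calc φ ((e * x * f + e * y * f) - star (e * x * f + e * y * f))
      = φ (pn (k + 3) (e + e * y * f) (e * x * f + f) f) := by
        rw [pn_add_left, pn_add_right, pn_add_right, v₁, v₂, v₃, v₄, star_add]
        congr 1
        abel
    _ = pn (k + 3) (φ e + φ (e * y * f)) (φ (e * x * f) + φ f) (φ f) := by
        rw [h.map_pn_right, hsplit_left, hsplit_right]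
    _ = φ (pn (k + 3) e (e * x * f) f) + φ (pn (k + 3) e f f)
        + (φ (pn (k + 3) (e * y * f) (e * x * f) f) + φ (pn (k + 3) (e * y * f) f f)) := by
        simp only [pn_add_left, pn_add_right, h.map_pn_right]
        abel
    _ = φ (e * x * f - star (e * x * f)) + φ (e * y * f - star (e * y * f)) := by
        rw [v₁, v₂, v₃, v₄, h.map_zero, add_zero, zero_add]

lemma map_add_corner_offdiag (h : IsPnPreserver k e f φ) (x y : A) :
    φ (e * x * f + e * y * f) = φ (e * x * f) + φ (e * y * f) := by
  have he := h.isStarProjection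
  have hf := h.symm.isStarProjection
  have hef := h.add_eq_one
  have hfe := h.symm.add_eq_one
  have hef₀ := he.mul_eq_zero_of_add_eq_one hef
  have hfe₀ := he.mul_eq_zero_of_add_eq_one' hef
  refine h.map_add_of_map_add_pn ?ef
    (map_add_of_eq_zero_or h.map_zero <| .inl <| pn_proj_compl_eq_zero hf hfe k ?_)
    (fun z => map_add_of_eq_zero_or h.map_zero <| .inl <| pn_corner_compl_eq_zero he hef k z ?_)
    (fun z => map_add_of_eq_zero_or h.map_zero <| .inl <| pn_corner_compl_eq_zero hf hfe k z ?_)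
  case ef =>
    rw [pn_proj_compl_corner he hef, pn_proj_compl_corner he hef, ← h.map_sub_star_add, star_add]
    congr 1
    abel
  all_goals simp [mul_assoc, hfe₀, mul_mul_eq_zero_of_mul_eq_zero hfe₀]

lemma map_add_corner_diag (h : IsPnPreserver k e f φ) (x y : A) :
    φ (e * x * e + e * y * e) = φ (e * x * e) + φ (e * y * e) := by
  have he := h.isStarProjection
  have hf := h.symm.isStarProjection
  have hef := h.add_eq_one
  have hfe := h.symm.add_eq_one
  have hef₀ := he.mul_eq_zero_of_add_eq_one hef
  have hfe₀ := he.mul_eq_zero_of_add_eq_one' hef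
  have hcorner : ∀ z u, f * z * (e * (e * u * e) * e) = f * (z * (e * u * e)) * e := fun z u => by
    simp only [mul_assoc, he.isIdempotentElem.mul_self_mul, he.isIdempotentElem.eq]
  refine h.map_add_of_map_add_pn
    (map_add_of_eq_zero_or h.map_zero <| .inl <| pn_proj_compl_eq_zero he hef k ?_)
    (map_add_of_eq_zero_or h.map_zero <| .inl <| pn_proj_compl_eq_zero hf hfe k ?_)
    (fun z => map_add_of_eq_zero_or h.map_zero <| .inl <| pn_corner_compl_eq_zero he hef k z ?_)
    (fun z => ?ee)
  case ee =>
    rw [pn_corner_compl hf hfe, pn_corner_compl hf hfe, hcorner, hcorner,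
      ← h.symm.map_sub_star_add, star_add]
    congr 1
    abel
  all_goals simp [mul_assoc, hef₀, mul_mul_eq_zero_of_mul_eq_zero hfe₀]

lemma map_eq_peirce_sum (h : IsPnPreserver k e f φ) (x : A) :
    φ x = φ (e * x * e) + φ (e * x * f) + (φ (f * x * e) + φ (f * x * f)) := by
  have he := h.isStarProjection
  have hf := h.symm.isStarProjection
  have hef₀ := he.mul_eq_zero_of_add_eq_one h.add_eq_one
  have hfe₀ := he.mul_eq_zero_of_add_eq_one' h.add_eq_one
  conv_lhs => rw [← peirce_decomposition h.add_eq_one x]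
  rw [h.map_add_of_disjoint, h.map_add_of_disjoint, h.map_add_of_disjoint] <;>
    simp [mul_add, add_mul, mul_assoc, he.isIdempotentElem.mul_self_mul,
      hf.isIdempotentElem.mul_self_mul, hef₀, hfe₀, mul_mul_eq_zero_of_mul_eq_zero hef₀,
      mul_mul_eq_zero_of_mul_eq_zero hfe₀]

lemma map_add (h : IsPnPreserver k e f φ) (x y : A) : φ (x + y) = φ x + φ y := by
  rw [h.map_eq_peirce_sum (x + y), h.map_eq_peirce_sum x, h.map_eq_peirce_sum y]
  simp only [mul_add, add_mul]
  rw [h.map_add_corner_diag, h.map_add_corner_offdiag, h.symm.map_add_corner_offdiag,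
    h.symm.map_add_corner_diag]
  abel

end IsPnPreserver

end Preserver

section Multiplicative

open Complex

variable {R : Type*} [Ring R] [StarRing R] [Algebra ℂ R] [StarModule ℂ R]

lemma two_smul_mul_eq (u v : R) : (2 : ℂ) • (u * v) = starLie u v - I • starLie (I • u) v := by
  simp only [starLie, star_smul, star_def, conj_I, smul_mul_assoc, mul_smul_comm, mul_neg,
    smul_sub, smul_smul, neg_smul, smul_neg, I_mul_I, neg_neg, one_smul]
  module

lemma four_smul_mul_eq (u v : R) :
    (4 : ℂ) • (u * v) = skewStarLie u v - I • skewStarLie (I • u) v - I • skewStarLie u (I • v)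
      - skewStarLie (I • u) (I • v) := by
  simp only [skewStarLie, starLie, star_sub, star_mul, star_star, star_smul, star_neg, star_def,
    conj_I, smul_mul_assoc, mul_smul_comm, mul_neg, smul_sub, smul_smul, neg_smul, smul_neg,
    I_mul_I, neg_neg, one_smul]
  module

variable {R' : Type*} [Ring R'] [StarRing R'] [Algebra ℂ R'] [StarModule ℂ R'] {φ : R → R'}

lemma map_mul_of_map_starLie (hsmul : ∀ (c : ℂ) (a : R), φ (c • a) = c • φ a)
    (hφ : ∀ a b, φ (starLie a b) = starLie (φ a) (φ b)) {a b : R} (hba : b * star a = 0) :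
    φ (a * b) = φ a * φ b := by
  have h₁ : starLie a b = a * b := by rw [starLie, hba, sub_zero]
  have hI : starLie (I • a) b = I • (a * b) := by
    rw [starLie, star_smul, mul_smul_comm, hba, smul_zero, sub_zero, smul_mul_assoc]
  apply smul_right_injective R' (two_ne_zero : (2 : ℂ) ≠ 0)
  calc (2 : ℂ) • φ (a * b) = φ (starLie a b) - I • φ (starLie (I • a) b) := by
        rw [h₁, hI, hsmul, smul_smul, I_mul_I, neg_one_smul, sub_neg_eq_add, two_smul]
    _ = (2 : ℂ) • (φ a * φ b) := by rw [hφ, hφ, hsmul, two_smul_mul_eq]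

lemma map_mul_of_map_add (hadd : ∀ x y, φ (x + y) = φ x + φ y)
    (hsmul : ∀ (c : ℂ) (a : R), φ (c • a) = c • φ a) (hunit : φ 1 = 1) (k : ℕ)
    (hφ : ∀ a b, φ (pn (k + 3) a b 1) = pn (k + 3) (φ a) (φ b) (φ 1)) (u v : R) :
    φ (u * v) = φ u * φ v := by
  let L : R →ₗ[ℂ] R' := { toFun := φ, map_add' := hadd, map_smul' := hsmul }
  have hskew : ∀ a b, L (skewStarLie a b) = skewStarLie (φ a) (φ b) := fun a b => by
    have h := hφ a b
    rw [hunit, pn_one, pn_one, ← Nat.cast_smul_eq_nsmul ℂ, ← Nat.cast_smul_eq_nsmul ℂ, hsmul] at h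
    exact smul_right_injective R' (by simp) h
  apply smul_right_injective R' (by norm_num : (4 : ℂ) ≠ 0)
  calc (4 : ℂ) • φ (u * v) = L ((4 : ℂ) • (u * v)) := (hsmul _ _).symm
    _ = (4 : ℂ) • (φ u * φ v) := by
      rw [four_smul_mul_eq, four_smul_mul_eq]
      simp only [map_sub, map_smul, hskew, hsmul]

end Multiplicative

variable {A A' : Type*}
  [NormedRing A] [StarRing A] [CStarRing A] [NormedAlgebra ℂ A]
  [CompleteSpace A] [StarModule ℂ A]
  [NormedRing A'] [StarRing A'] [CStarRing A'] [NormedAlgebra ℂ A']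
  [CompleteSpace A'] [StarModule ℂ A']

theorem stmt14_general
    (P₁ : A) (hP₁proj : P₁ * P₁ = P₁) (hP₁star : star P₁ = P₁)
    (P₂ : A) (hP₂ : P₂ = 1 - P₁)
    (hspade : ∀ Pj ∈ ({P₁, P₂} : Set A), ∀ X : A, (∀ Y : A, Pj * Y * X = 0) → X = 0)
    (n : ℕ) (hn : 2 ≤ n)
    (φ : A → A') (hbij : Function.Bijective φ) (hunit : φ 1 = 1)
    (hsmul : ∀ (c : ℂ) (a : A), φ (c • a) = c • φ a)
    (hbullet : ∀ a b : A, ∀ Ξ ∈ ({P₁, P₂, 1} : Set A),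
      φ (pn n a b Ξ) = pn n (φ a) (φ b) (φ Ξ))
    :
    ∀ Pj Pk : A, (Pj = P₁ ∧ Pk = P₂) ∨ (Pj = P₂ ∧ Pk = P₁) →
      ∀ a b : A, (∃ x : A, a = Pj * x * Pj) → (∃ y : A, b = Pj * y * Pk) →
        φ (a * b) = φ a * φ b := by
  rintro Pj Pk hjk a b ⟨x, rfl⟩ ⟨y, rfl⟩
  have hP₁ : IsStarProjection P₁ := ⟨hP₁proj, hP₁star⟩
  have hsum : P₁ + P₂ = 1 := by rw [hP₂, add_sub_cancel]
  obtain ⟨m, rfl⟩ := Nat.exists_eq_add_of_le' hn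
  cases m with
  | zero =>
    have hkj : Pk * star Pj = 0 := by
      rcases hjk with ⟨rfl, rfl⟩ | ⟨rfl, rfl⟩
      · rw [hP₁star, hP₁.mul_eq_zero_of_add_eq_one' hsum]
      · rw [(hP₁.of_add_eq_one hsum).isSelfAdjoint.star_eq, hP₁.mul_eq_zero_of_add_eq_one hsum]
    -- `pn 2 u v Ξ` unfolds to `starLie u v`, whatever `Ξ` is
    refine map_mul_of_map_starLie hsmul (fun u v => hbullet u v 1 (by simp)) ?_
    simp [star_mul, mul_assoc, mul_mul_eq_zero_of_mul_eq_zero hkj]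
  | succ k =>
    have h : IsPnPreserver k P₁ P₂ φ :=
      { isStarProjection := hP₁
        add_eq_one := hsum
        spade_left := hspade P₁ (by simp)
        spade_right := hspade P₂ (by simp)
        bijective := hbij
        map_zero := by simpa using hsmul 0 0
        map_pn_left := fun a b => hbullet a b P₁ (by simp)
        map_pn_right := fun a b => hbullet a b P₂ (by simp) }
    exact map_mul_of_map_add h.map_add hsmul hunit k (fun u v => hbullet u v 1 (by simp)) _ _

theorem stmt14
    (P₁ : A) (hP₁proj : P₁ * P₁ = P₁) (hP₁star : star P₁ = P₁)
    (hP₁ne0 : P₁ ≠ 0) (hP₁ne1 : P₁ ≠ 1)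
    (P₂ : A) (hP₂ : P₂ = 1 - P₁)
    (hspade : ∀ Pj ∈ ({P₁, P₂} : Set A), ∀ X : A, (∀ Y : A, Pj * Y * X = 0) → X = 0)
    (n : ℕ) (hn : 2 ≤ n)
    (φ : A → A') (hbij : Function.Bijective φ) (hunit : φ 1 = 1)
    (hsmul : ∀ (c : ℂ) (a : A), φ (c • a) = c • φ a)
    (hbullet : ∀ a b : A, ∀ Ξ ∈ ({P₁, P₂, 1} : Set A),
      φ (pn n a b Ξ) = pn n (φ a) (φ b) (φ Ξ))
    :
    ∀ Pj Pk : A, (Pj = P₁ ∧ Pk = P₂) ∨ (Pj = P₂ ∧ Pk = P₁) →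
      ∀ a b : A, (∃ x : A, a = Pj * x * Pj) → (∃ y : A, b = Pj * y * Pk) →
        φ (a * b) = φ a * φ b :=
  stmt14_general P₁ hP₁proj hP₁star P₂ hP₂ hspade n hn φ hbij hunit hsmul hbullet
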